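/- arXiv:1003.0985 — 2 statements merged into one kernel-verified Lean document; each statement's English description precedes it below -/
import Mathlib

section
/- Let E be a simplicial commutative k-algebra whose Moore complex satisfies NE_4 = 0. Then for all x_2, y_2 ∈ NE_2 the following identity holds in E_3: (s_1 x_2 − s_0 x_2 + s_2 s_0 (d_2 x_2) − s_2 s_1 (d_2 x_2)) · (s_1 y_2 − s_2 y_2) = 0. -/
/-- A simplicial commutative `k`-algebra: a family of commutative `k`-algebras
`obj n` together with face algebra homomorphisms `d n i : obj (n+1) →ₐ[k] obj n`
(representing `d_i : E_{n+1} → E_n`, `0 ≤ i ≤ n+1`) and degeneracy algebra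
homomorphisms `s n i : obj n →ₐ[k] obj (n+1)` (representing
`s_i : E_n → E_{n+1}`, `0 ≤ i ≤ n`), satisfying the simplicial identities. -/
structure SimplicialCommAlg (k : Type*) [CommRing k]
    (obj : ℕ → Type*) [∀ n, CommRing (obj n)] [∀ n, Algebra k (obj n)] where
  d : (n : ℕ) → ℕ → (obj (n + 1) →ₐ[k] obj n)
  s : (n : ℕ) → ℕ → (obj n →ₐ[k] obj (n + 1))
  dd : ∀ (n i j : ℕ), i < j → j ≤ n + 2 →
    (d n i).comp (d (n + 1) j) = (d n (j - 1)).comp (d (n + 1) i)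
  ds_lt : ∀ (m i j : ℕ), i < j → j ≤ m + 1 →
    (d (m + 1) i).comp (s (m + 1) j) = (s m (j - 1)).comp (d m i)
  ds_self : ∀ (n j : ℕ), j ≤ n → (d n j).comp (s n j) = AlgHom.id k (obj n)
  ds_succ : ∀ (n j : ℕ), j ≤ n → (d n (j + 1)).comp (s n j) = AlgHom.id k (obj n)
  ds_gt : ∀ (m i j : ℕ), j + 1 < i → i ≤ m + 2 →
    (d (m + 1) i).comp (s (m + 1) j) = (s m j).comp (d m (i - 1))
  ss : ∀ (n i j : ℕ), i ≤ j → j ≤ n →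
    (s (n + 1) i).comp (s n j) = (s (n + 1) (j + 1)).comp (s n i)

/-! Write `a` and `b` for the two factors. The product `a * b` is the last face `d₄` of
`w = (s₃ a - s₂ a) * s₃ b ∈ E₄`. Since `d₁ a = d₃ a = 0` and `d₀ b = d₂ b = 0`
(as `d₀ y₂ = 0`), the simplicial identities give `dᵢ w = 0` for `i ≤ 3`, so `w ∈ NE₄ = 0`. -/

namespace SimplicialCommAlg

variable {k : Type*} [CommRing k] {obj : ℕ → Type*} [∀ n, CommRing (obj n)]
  [∀ n, Algebra k (obj n)] (E : SimplicialCommAlg k obj)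

@[simp]
theorem d_s_of_lt {m i j : ℕ} (hij : i < j) (hj : j ≤ m + 1) (z : obj (m + 1)) :
    E.d (m + 1) i (E.s (m + 1) j z) = E.s m (j - 1) (E.d m i z) :=
  AlgHom.congr_fun (E.ds_lt m i j hij hj) z

@[simp]
theorem d_s_self {n j : ℕ} (hj : j ≤ n) (z : obj n) : E.d n j (E.s n j z) = z :=
  AlgHom.congr_fun (E.ds_self n j hj) z

@[simp]
theorem d_succ_s {n j : ℕ} (hj : j ≤ n) (z : obj n) : E.d n (j + 1) (E.s n j z) = z :=
  AlgHom.congr_fun (E.ds_succ n j hj) z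

@[simp]
theorem d_s_of_gt {m i j : ℕ} (hij : j + 1 < i) (hi : i ≤ m + 2) (z : obj (m + 1)) :
    E.d (m + 1) i (E.s (m + 1) j z) = E.s m j (E.d m (i - 1) z) :=
  AlgHom.congr_fun (E.ds_gt m i j hij hi) z

theorem mul_eq_zero_of_moore_four_trivial
    (hNE4 : ∀ w : obj 4, E.d 3 0 w = 0 → E.d 3 1 w = 0 → E.d 3 2 w = 0 → E.d 3 3 w = 0 → w = 0)
    {a b : obj 3} (ha₁ : E.d 2 1 a = 0) (ha₃ : E.d 2 3 a = 0) (hb₀ : E.d 2 0 b = 0)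
    (hb₂ : E.d 2 2 b = 0) : a * b = 0 := by
  set w := (E.s 3 3 a - E.s 3 2 a) * E.s 3 3 b
  have hw : w = 0 :=
    hNE4 w (by simp [w, hb₀]) (by simp [w, ha₁]) (by simp [w, hb₂]) (by simp [w])
  simpa [w, ha₃] using congrArg (E.d 3 4) hw

end SimplicialCommAlg

theorem stmt_10_general {k : Type*} [CommRing k] {obj : ℕ → Type*}
    [∀ n, CommRing (obj n)] [∀ n, Algebra k (obj n)]
    (E : SimplicialCommAlg k obj)
    (hNE4 : ∀ w : obj 4, E.d 3 0 w = 0 → E.d 3 1 w = 0 →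
      E.d 3 2 w = 0 → E.d 3 3 w = 0 → w = 0)
    (x2 : obj 2) (y2 : obj 2) (hy2 : E.d 1 0 y2 = 0 ∧ E.d 1 1 y2 = 0) :
    (E.s 2 1 x2 - E.s 2 0 x2 + E.s 2 2 (E.s 1 0 (E.d 1 2 x2)) -
        E.s 2 2 (E.s 1 1 (E.d 1 2 x2))) * (E.s 2 1 y2 - E.s 2 2 y2) = 0 := by
  apply E.mul_eq_zero_of_moore_four_trivial hNE4 <;> simp [hy2.1]

theorem stmt_10 {k : Type*} [CommRing k] {obj : ℕ → Type*}
    [∀ n, CommRing (obj n)] [∀ n, Algebra k (obj n)]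
    (E : SimplicialCommAlg k obj)
    (hNE4 : ∀ w : obj 4, E.d 3 0 w = 0 → E.d 3 1 w = 0 →
      E.d 3 2 w = 0 → E.d 3 3 w = 0 → w = 0)
    (x2 : obj 2) (hx2 : E.d 1 0 x2 = 0 ∧ E.d 1 1 x2 = 0) (y2 : obj 2) (hy2 : E.d 1 0 y2 = 0 ∧ E.d 1 1 y2 = 0) :
    (E.s 2 1 x2 - E.s 2 0 x2 + E.s 2 2 (E.s 1 0 (E.d 1 2 x2)) -
        E.s 2 2 (E.s 1 1 (E.d 1 2 x2))) * (E.s 2 1 y2 - E.s 2 2 y2) = 0 :=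
  stmt_10_general E hNE4 x2 y2 hy2
end

section
/- Let E be a simplicial commutative k-algebra whose Moore complex satisfies NE_4 = 0. Then for all x_3, y_3 ∈ NE_3 the following identity holds in E_3: x_3 · (s_2 d_3 y_3 − y_3) = 0. Equivalently, with the action of x_2 ∈ NE_2 on NE_3 defined by x_2 · x_3 = s_2(x_2) x_3, the restriction ∂_3 = d_3 : NE_3 → NE_2 satisfies the Peiffer identity ∂_3(x_3) · y_3 = x_3 y_3, so (NE_3, NE_2, ∂_3) is a crossed module. -/
namespace SimplicialCommAlg

variable {k : Type*} [CommRing k] {obj : ℕ → Type*} [∀ n, CommRing (obj n)]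
  [∀ n, Algebra k (obj n)] (E : SimplicialCommAlg k obj)

theorem d_s_last_of_le {m i : ℕ} (hi : i ≤ m) (a : obj (m + 1)) :
    E.d (m + 1) i (E.s (m + 1) (m + 1) a) = E.s m m (E.d m i a) :=
  AlgHom.congr_fun (E.ds_lt m i (m + 1) (Nat.lt_succ_of_le hi) le_rfl) a

theorem d_s_self_apply {n j : ℕ} (hj : j ≤ n) (a : obj n) : E.d n j (E.s n j a) = a :=
  AlgHom.congr_fun (E.ds_self n j hj) a

theorem d_succ_s_apply {n j : ℕ} (hj : j ≤ n) (a : obj n) : E.d n (j + 1) (E.s n j a) = a :=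
  AlgHom.congr_fun (E.ds_succ n j hj) a

theorem d_last_s_pred (m : ℕ) (a : obj (m + 1)) :
    E.d (m + 1) (m + 2) (E.s (m + 1) m a) = E.s m m (E.d m (m + 1) a) :=
  AlgHom.congr_fun (E.ds_gt m (m + 2) m (by omega) le_rfl) a

theorem mul_s_d_last_sub_eq_zero {m : ℕ}
    (hN : ∀ w : obj (m + 2), (∀ i ≤ m + 1, E.d (m + 1) i w = 0) → w = 0)
    {x : obj (m + 1)} (hx : ∀ i ≤ m, E.d m i x = 0) (y : obj (m + 1)) :
    x * (E.s m m (E.d m (m + 1) y) - y) = 0 := by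
  set w := E.s (m + 1) (m + 1) x * (E.s (m + 1) (m + 1) y - E.s (m + 1) m y)
  have hw : w = 0 := by
    refine hN w fun i hi => ?_
    rcases hi.lt_or_eq with hi | rfl
    · rw [map_mul, E.d_s_last_of_le (Nat.le_of_lt_succ hi), hx i (Nat.le_of_lt_succ hi),
        map_zero, zero_mul]
    · rw [map_mul, map_sub, E.d_s_self_apply le_rfl, E.d_s_self_apply le_rfl,
        E.d_succ_s_apply (Nat.le_succ m), sub_self, mul_zero]
  have hlast := congrArg (E.d (m + 1) (m + 2)) hw
  rw [map_mul, map_sub, E.d_succ_s_apply le_rfl, E.d_succ_s_apply le_rfl, E.d_last_s_pred,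
    map_zero] at hlast
  linear_combination -hlast

theorem s_d_last_mul_eq_mul {m : ℕ}
    (hN : ∀ w : obj (m + 2), (∀ i ≤ m + 1, E.d (m + 1) i w = 0) → w = 0)
    {x y : obj (m + 1)} (hy : ∀ i ≤ m, E.d m i y = 0) :
    E.s m m (E.d m (m + 1) x) * y = x * y := by
  linear_combination E.mul_s_d_last_sub_eq_zero hN hy x

end SimplicialCommAlg

theorem stmt_14 {k : Type*} [CommRing k] {obj : ℕ → Type*}
    [∀ n, CommRing (obj n)] [∀ n, Algebra k (obj n)]
    (E : SimplicialCommAlg k obj)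
    (hNE4 : ∀ w : obj 4, E.d 3 0 w = 0 → E.d 3 1 w = 0 →
      E.d 3 2 w = 0 → E.d 3 3 w = 0 → w = 0)
    (x3 : obj 3) (hx3 : E.d 2 0 x3 = 0 ∧ E.d 2 1 x3 = 0 ∧ E.d 2 2 x3 = 0) (y3 : obj 3) (hy3 : E.d 2 0 y3 = 0 ∧ E.d 2 1 y3 = 0 ∧ E.d 2 2 y3 = 0) :
    x3 * (E.s 2 2 (E.d 2 3 y3) - y3) = 0 ∧ E.s 2 2 (E.d 2 3 x3) * y3 = x3 * y3 := by
  have hN : ∀ w : obj 4, (∀ i ≤ 3, E.d 3 i w = 0) → w = 0 := fun w hw =>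
    hNE4 w (hw 0 (by norm_num)) (hw 1 (by norm_num)) (hw 2 (by norm_num)) (hw 3 le_rfl)
  have mem_NE3 : ∀ z : obj 3, E.d 2 0 z = 0 ∧ E.d 2 1 z = 0 ∧ E.d 2 2 z = 0 →
      ∀ i ≤ 2, E.d 2 i z = 0 := by
    rintro z ⟨h0, h1, h2⟩ i hi
    interval_cases i <;> assumption
  exact ⟨E.mul_s_d_last_sub_eq_zero hN (mem_NE3 x3 hx3) y3,
    E.s_d_last_mul_eq_mul hN (mem_NE3 y3 hy3)⟩
end
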